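/- Let F be a finite field of order q^2 with q a power of 2, let π(x) = x^{−q}, and let r, s be nonzero elements of the algebraic closure of F lying in distinct π-orbits P and Q. Then S = Σ_{(u,v) ∈ P×Q} uv/(u−v)^2 lies in the subfield H of order q and Tr_{H/F_2}(S) ≡ |P|·|Q| (mod 2). -/

import Mathlib

/-!
Put `A = Σ_{(u,v) ∈ P×Q} u/(u - v)`. In characteristic 2, `uv/(u - v)² = u/(u - v) + (u/(u - v))²`,
so `S = A + A²` and the trace of `S` telescopes to `A + A^q`. Since `π` permutes each orbit,
reindexing `A` along `π` rewrites its summands as `v^q/(v^q - u^q)`, which pair with the summands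
`u^q/(u^q - v^q)` of `A^q` to give `A + A^q = |P|·|Q|`. This lies in `𝔽₂`, and then
`S^q = A^q + A^{2q}` collapses back to `S`.
-/

open Finset Function

section Orbit

variable {α : Type*} {f : α → α} {r s x : α} {P Q : Finset α}

lemma mem_periodicPts_of_forall_mem_iff_iterate (hf : Injective f)
    (hP : ∀ x, x ∈ P ↔ ∃ k : ℕ, f^[k] r = x) : r ∈ periodicPts f := by
  obtain ⟨i, j, hij, hne⟩ : ∃ i j : ℕ, f^[i] r = f^[j] r ∧ i ≠ j := by
    simpa [Injective, Subtype.ext_iff] using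
      not_injective_infinite_finite (fun k : ℕ => (⟨f^[k] r, (hP _).2 ⟨k, rfl⟩⟩ : P))
  rcases lt_or_gt_of_ne hne with hlt | hlt
  · exact mk_mem_periodicPts (by lia) (iterate_cancel hf hij.symm)
  · exact mk_mem_periodicPts (by lia) (iterate_cancel hf hij)

lemma subset_of_forall_mem_iff_iterate (hf : Injective f)
    (hP : ∀ x, x ∈ P ↔ ∃ k : ℕ, f^[k] r = x) (hQ : ∀ x, x ∈ Q ↔ ∃ k : ℕ, f^[k] s = x)
    (hxP : x ∈ P) (hxQ : x ∈ Q) : P ⊆ Q := by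
  obtain ⟨n, hn, hr⟩ := mem_periodicPts_of_forall_mem_iff_iterate hf hP
  obtain ⟨i, rfl⟩ := (hP x).1 hxP
  obtain ⟨j, hj⟩ := (hQ _).1 hxQ
  have hback : f^[n * i - i] (f^[i] r) = r := by
    rw [← iterate_add_apply, Nat.sub_add_cancel (Nat.le_mul_of_pos_left i hn),
      iterate_mul]
    exact iterate_fixed hr i
  intro y hy
  obtain ⟨k, rfl⟩ := (hP y).1 hy
  exact (hQ _).2 ⟨k + (n * i - i) + j, by rw [iterate_add_apply, iterate_add_apply, hj, hback]⟩

lemma disjoint_of_forall_mem_iff_iterate (hf : Injective f)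
    (hP : ∀ x, x ∈ P ↔ ∃ k : ℕ, f^[k] r = x) (hQ : ∀ x, x ∈ Q ↔ ∃ k : ℕ, f^[k] s = x)
    (hPQ : P ≠ Q) : Disjoint P Q :=
  Finset.disjoint_left.2 fun _ hxP hxQ => hPQ <|
    (subset_of_forall_mem_iff_iterate hf hP hQ hxP hxQ).antisymm
      (subset_of_forall_mem_iff_iterate hf hQ hP hxQ hxP)

lemma mapsTo_of_forall_mem_iff_iterate (hP : ∀ x, x ∈ P ↔ ∃ k : ℕ, f^[k] r = x) :
    ∀ x ∈ P, f x ∈ P := by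
  intro x hx
  obtain ⟨k, rfl⟩ := (hP x).1 hx
  exact (hP _).2 ⟨k + 1, iterate_succ_apply' f k r⟩

lemma forall_mem_of_forall_mem_iff_iterate {p : α → Prop} (hf : ∀ x, p x → p (f x))
    (hP : ∀ x, x ∈ P ↔ ∃ k : ℕ, f^[k] r = x) (hr : p r) : ∀ x ∈ P, p x := by
  intro x hx
  obtain ⟨k, rfl⟩ := (hP x).1 hx
  exact Set.MapsTo.iterate (s := {x | p x}) hf k hr

lemma Finset.sum_comp_of_mapsTo {M : Type*} [AddCommMonoid M] (hf : Injective f)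
    (hP : ∀ x ∈ P, f x ∈ P) (g : α → M) :
    ∑ x ∈ P, g (f x) = ∑ x ∈ P, g x := by
  classical
  have hPf : P.image f = P :=
    eq_of_subset_of_card_le (image_subset_iff.2 hP) (card_image_of_injective P hf).ge
  rw [← sum_image hf.injOn, hPf]

end Orbit

section Field

variable {K : Type*} [Field K]

lemma inv_div_inv_sub_inv {x y : K} (hx : x ≠ 0) (hy : y ≠ 0) :
    x⁻¹ / (x⁻¹ - y⁻¹) = y / (y - x) := by
  rw [inv_sub_inv hx hy, div_div_eq_mul_div, inv_mul_cancel_left₀ hx]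

lemma div_sub_add_div_sub {x y : K} (h : x ≠ y) : x / (x - y) + y / (y - x) = 1 := by
  rw [← neg_sub x y, div_neg, ← sub_eq_add_neg, ← sub_div, div_self (sub_ne_zero.2 h)]

lemma injective_inv_pow_expChar_pow (p n : ℕ) [ExpChar K p] :
    Injective fun y : K => (y ^ p ^ n)⁻¹ :=
  inv_injective.comp (iterateFrobenius_inj K p n)

theorem sum_sum_div_sub_add_pow_eq_card_mul_card (p n : ℕ) [ExpChar K p] {P Q : Finset K}
    (hP : ∀ u ∈ P, (u ^ p ^ n)⁻¹ ∈ P) (hQ : ∀ v ∈ Q, (v ^ p ^ n)⁻¹ ∈ Q)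
    (hP0 : 0 ∉ P) (hQ0 : 0 ∉ Q) (hPQ : Disjoint P Q) :
    ∑ u ∈ P, ∑ v ∈ Q, u / (u - v) + (∑ u ∈ P, ∑ v ∈ Q, u / (u - v)) ^ p ^ n =
      (#P * #Q : ℕ) := by
  have hinj := injective_inv_pow_expChar_pow (K := K) p n
  have hpair : ∀ u ∈ P, ∀ v ∈ Q,
      (u ^ p ^ n)⁻¹ / ((u ^ p ^ n)⁻¹ - (v ^ p ^ n)⁻¹) + (u / (u - v)) ^ p ^ n = 1 := by
    intro u hu v hv
    have hu0 : u ^ p ^ n ≠ 0 := pow_ne_zero _ (ne_of_mem_of_not_mem hu hP0)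
    have hv0 : v ^ p ^ n ≠ 0 := pow_ne_zero _ (ne_of_mem_of_not_mem hv hQ0)
    have huv : u ^ p ^ n ≠ v ^ p ^ n :=
      (iterateFrobenius_inj K p n).ne (disjoint_left.1 hPQ hu <| · ▸ hv)
    rw [inv_div_inv_sub_inv hu0 hv0, div_pow, sub_pow_expChar_pow, add_comm,
      div_sub_add_div_sub huv]
  have hreindex : ∑ u ∈ P, ∑ v ∈ Q, u / (u - v) =
      ∑ u ∈ P, ∑ v ∈ Q, (u ^ p ^ n)⁻¹ / ((u ^ p ^ n)⁻¹ - (v ^ p ^ n)⁻¹) := by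
    rw [← sum_comp_of_mapsTo hinj hP]
    exact sum_congr rfl fun u _ => (sum_comp_of_mapsTo hinj hQ _).symm
  rw [sum_pow_char_pow, hreindex]
  simp_rw [sum_pow_char_pow, ← sum_add_distrib]
  rw [sum_congr rfl fun u hu => sum_congr rfl (hpair u hu)]
  simp

lemma mul_div_sub_sq [CharP K 2] (u v : K) :
    u * v / (u - v) ^ 2 = u / (u - v) + (u / (u - v)) ^ 2 := by
  rcases eq_or_ne u v with rfl | huv
  · simp
  have h : u - v ≠ 0 := sub_ne_zero.2 huv
  field_simp
  rw [CharTwo.sub_eq_add]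
  linear_combination (-u^2) * CharTwo.two_eq_zero (R := K)

end Field

section CharTwo

variable {R : Type*} [CommRing R] [CharP R 2]

lemma add_sq_pow_two_pow_eq_self {a b : R} (m : ℕ) (hb : b ^ 2 = b)
    (hab : a + a ^ 2 ^ m = b) : (a + a ^ 2) ^ 2 ^ m = a + a ^ 2 := by
  have ha : a ^ 2 ^ m = a + b := by rw [← hab, CharTwo.add_cancel_left]
  rw [add_pow_char_pow, ← pow_mul, mul_comm, pow_mul, ha, CharTwo.add_sq, hb, add_add_add_comm,
    CharTwo.add_self_eq_zero, add_zero]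

lemma sum_range_add_sq_pow_two_pow (a : R) (m : ℕ) :
    ∑ i ∈ Finset.range m, (a + a ^ 2) ^ 2 ^ i = a + a ^ 2 ^ m := by
  induction m with
  | zero => simp [CharTwo.add_self_eq_zero]
  | succ m ih =>
    rw [Finset.sum_range_succ, ih, add_pow_char_pow, ← pow_mul, ← pow_succ', add_assoc,
      CharTwo.add_cancel_left]

end CharTwo

/-- For `F` of order `q^2`, `q = 2^m`, and `P`, `Q` distinct `π`-orbits (under
`π(x) = x^{-q}`) of nonzero elements `r`, `s` of the algebraic closure, the sum
`S = Σ_{(u,v)∈P×Q} uv/(u-v)^2` lies in the half field `H` of order `q` (`S^q = S`) and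
`Tr_{H/F_2}(S) = S + S^2 + ⋯ + S^(q/2)` equals `|P|·|Q| mod 2`. -/
theorem stmt10 (m q : ℕ) (hm : 0 < m) (hq : q = 2 ^ m)
    (F : Type) [Field F] [Fintype F] (hF : Fintype.card F = q ^ 2)
    (r s : AlgebraicClosure F) (hr : r ≠ 0) (hs : s ≠ 0)
    (P Q : Finset (AlgebraicClosure F))
    (hP : ∀ x, x ∈ P ↔ ∃ k : ℕ, (fun y : AlgebraicClosure F => (y ^ q)⁻¹)^[k] r = x)
    (hQ : ∀ x, x ∈ Q ↔ ∃ k : ℕ, (fun y : AlgebraicClosure F => (y ^ q)⁻¹)^[k] s = x)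
    (hPQ : P ≠ Q) :
    let S : AlgebraicClosure F := ∑ u ∈ P, ∑ v ∈ Q, u * v / (u - v) ^ 2
    S ^ q = S ∧
      ∑ i ∈ Finset.range m, S ^ 2 ^ i = ((P.card * Q.card : ℕ) : AlgebraicClosure F) := by
  intro S
  have : CharP F 2 := ringChar.of_eq <| FiniteField.even_card_iff_char_two.2 <| by
    rw [hF, hq, ← pow_mul, Nat.pow_mod]
    simp [hm.ne']
  subst hq
  have hπ := injective_inv_pow_expChar_pow (K := AlgebraicClosure F) 2 m
  have hnonzero {r₀ : AlgebraicClosure F} {P₀ : Finset (AlgebraicClosure F)} (hr₀ : r₀ ≠ 0)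
      (hP₀ : ∀ x, x ∈ P₀ ↔ ∃ k : ℕ, (fun y : AlgebraicClosure F => (y ^ 2 ^ m)⁻¹)^[k] r₀ = x) :
      0 ∉ P₀ := fun h => forall_mem_of_forall_mem_iff_iterate (p := (· ≠ 0))
        (fun _ hx => inv_ne_zero (pow_ne_zero _ hx)) hP₀ hr₀ 0 h rfl
  have hA := sum_sum_div_sub_add_pow_eq_card_mul_card 2 m (mapsTo_of_forall_mem_iff_iterate hP)
    (mapsTo_of_forall_mem_iff_iterate hQ) (hnonzero hr hP) (hnonzero hs hQ)
    (disjoint_of_forall_mem_iff_iterate hπ hP hQ hPQ)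
  have hS : S = ∑ u ∈ P, ∑ v ∈ Q, u / (u - v) + (∑ u ∈ P, ∑ v ∈ Q, u / (u - v)) ^ 2 := by
    simp only [S, CharTwo.sum_sq, mul_div_sub_sq, sum_add_distrib]
  have hN : ((#P * #Q : ℕ) : AlgebraicClosure F) ^ 2 = (#P * #Q : ℕ) :=
    map_natCast (frobenius (AlgebraicClosure F) 2) _
  rw [hS]
  exact ⟨add_sq_pow_two_pow_eq_self m hN hA, (sum_range_add_sq_pow_two_pow _ m).trans hA⟩
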